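/- Let s > 0 be a real number (playing the role of √(−κ) for a curvature bound κ < 0). Let a, b ≥ 0 and c > 0 be real numbers and let t ∈ [−1, 1]. If the hyperbolic law of cosines holds, i.e. cosh(s·a) = cosh(s·b)·cosh(s·c) − sinh(s·b)·sinh(s·c)·t, then a² ≤ (s·c·cosh(s·c)/sinh(s·c))·b² + c² − 2·b·c·t. -/

import Mathlib

/-!
Rescaling by `s` reduces to `s = 1`. For `t < 1` regard the third side
`A(x) = arcosh (cosh x * cosh c - sinh x * sinh c * t)` as a function of the side `x = b`.
The gap `K x² + c² - 2xct - A(x)²`, with `K = c coth c`, vanishes to first order at `x = 0`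
(`A(0) = c`, `A'(0) = -t`), so it suffices that `(A²/2)'' ≤ K`. Along the side,
`(A²/2)'' = 1 + e (A cosh A - sinh A) / sinh³ A` with the constant `e = (1 - t²) sinh² c`,
and `e ≤ min (sinh² A) (sinh² c)`. Since `K = 1 + sinh² c · (c cosh c - sinh c) / sinh³ c`,
the bound follows from the monotonicity of `z coth z` when `A ≤ c`, and from the antitonicity of
`(z cosh z - sinh z) / sinh³ z` when `A ≥ c`.
For `t = 1` the law of cosines gives `|a| = |b - c|`.
-/

open Real Set

theorem monotoneOn_of_hasDerivAt_nonneg {D : Set ℝ} (hD : Convex ℝ D) {f f' : ℝ → ℝ}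
    (hf : ∀ x ∈ D, HasDerivAt f (f' x) x) (hf' : ∀ x ∈ interior D, 0 ≤ f' x) :
    MonotoneOn f D :=
  monotoneOn_of_hasDerivWithinAt_nonneg hD (fun x hx => (hf x hx).continuousAt.continuousWithinAt)
    (fun x hx => (hf x (interior_subset hx)).hasDerivWithinAt) hf'

theorem antitoneOn_of_hasDerivAt_nonpos {D : Set ℝ} (hD : Convex ℝ D) {f f' : ℝ → ℝ}
    (hf : ∀ x ∈ D, HasDerivAt f (f' x) x) (hf' : ∀ x ∈ interior D, f' x ≤ 0) :
    AntitoneOn f D :=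
  antitoneOn_of_hasDerivWithinAt_nonpos hD (fun x hx => (hf x hx).continuousAt.continuousWithinAt)
    (fun x hx => (hf x (interior_subset hx)).hasDerivWithinAt) hf'

namespace Real

theorem sinh_le_mul_cosh {x : ℝ} (hx : 0 ≤ x) : sinh x ≤ x * cosh x := by
  have hmono : MonotoneOn (fun y => y * cosh y - sinh y) (Ici 0) :=
    monotoneOn_of_hasDerivAt_nonneg (f' := fun y => y * sinh y) (convex_Ici 0)
      (fun y _ => (((hasDerivAt_id' y).fun_mul (hasDerivAt_cosh y)).fun_sub
        (hasDerivAt_sinh y)).congr_deriv (by ring))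
      (fun y hy => by
        rw [interior_Ici] at hy
        exact mul_nonneg hy.le (sinh_nonneg_iff.2 hy.le))
  simpa using hmono self_mem_Ici hx hx

theorem three_mul_sinh_mul_cosh_le {x : ℝ} (hx : 0 ≤ x) :
    3 * sinh x * cosh x ≤ x * (2 * cosh x ^ 2 + 1) := by
  have hmono : MonotoneOn (fun y => y * (2 * cosh y ^ 2 + 1) - 3 * sinh y * cosh y) (Ici 0) :=
    monotoneOn_of_hasDerivAt_nonneg (f' := fun y => 4 * sinh y * (y * cosh y - sinh y))
      (convex_Ici 0)
      (fun y _ => (((hasDerivAt_id' y).fun_mul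
        ((((hasDerivAt_cosh y).fun_pow 2).const_mul 2).add_const 1)).fun_sub
        (((hasDerivAt_sinh y).const_mul 3).fun_mul (hasDerivAt_cosh y))).congr_deriv
          (by linear_combination (-1 : ℝ) * cosh_sq y))
      (fun y hy => by
        rw [interior_Ici] at hy
        have := sinh_le_mul_cosh hy.le
        have := sinh_nonneg_iff.2 hy.le
        positivity)
  simpa using hmono self_mem_Ici hx hx

theorem monotoneOn_mul_cosh_div_sinh : MonotoneOn (fun x => x * cosh x / sinh x) (Ioi 0) :=
  monotoneOn_of_hasDerivAt_nonneg (f' := fun x => (sinh x * cosh x - x) / sinh x ^ 2)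
    (convex_Ioi 0)
    (fun x hx => (((hasDerivAt_id' x).fun_mul (hasDerivAt_cosh x)).fun_div (hasDerivAt_sinh x)
      (sinh_pos_iff.2 hx).ne').congr_deriv (by linear_combination (-x / sinh x ^ 2) * cosh_sq x))
    (fun x hx => by
      rw [interior_Ioi] at hx
      have := self_le_sinh_iff.2 hx.le
      have := one_le_cosh x
      have := sinh_pos_iff.2 hx
      apply div_nonneg _ (sq_nonneg _)
      nlinarith)

theorem antitoneOn_mul_cosh_sub_sinh_div_sinh_pow_three :
    AntitoneOn (fun x => (x * cosh x - sinh x) / sinh x ^ 3) (Ioi 0) := by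
  refine antitoneOn_of_hasDerivAt_nonpos
    (f' := fun x => (3 * sinh x * cosh x - x * (2 * cosh x ^ 2 + 1)) / sinh x ^ 4)
    (convex_Ioi 0) (fun x hx => ?_) (fun x hx => ?_)
  · have hs := (sinh_pos_iff.2 hx).ne'
    refine ((((hasDerivAt_id' x).fun_mul (hasDerivAt_cosh x)).fun_sub (hasDerivAt_sinh x)).fun_div
      ((hasDerivAt_sinh x).fun_pow 3) (pow_ne_zero 3 hs)).congr_deriv ?_
    field_simp
    linear_combination (-x * sinh x ^ 2) * cosh_sq x
  · rw [interior_Ioi] at hx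
    exact div_nonpos_of_nonpos_of_nonneg (by linarith [three_mul_sinh_mul_cosh_le hx.le])
      (by positivity)

theorem one_add_mul_le_mul_cosh_div_sinh {a c e : ℝ} (ha : 0 < a) (hc : 0 < c)
    (hea : e ≤ sinh a ^ 2) (hec : e ≤ sinh c ^ 2) :
    1 + e * ((a * cosh a - sinh a) / sinh a ^ 3) ≤ c * cosh c / sinh c := by
  have hsplit : ∀ z, 0 < z →
      z * cosh z / sinh z = 1 + sinh z ^ 2 * ((z * cosh z - sinh z) / sinh z ^ 3) := by
    intro z hz
    have := (sinh_pos_iff.2 hz).ne'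
    field_simp
    ring
  have hφa : 0 ≤ (a * cosh a - sinh a) / sinh a ^ 3 :=
    div_nonneg (by linarith [sinh_le_mul_cosh ha.le]) (pow_nonneg (sinh_pos_iff.2 ha).le 3)
  rcases le_total a c with hac | hca
  · calc 1 + e * ((a * cosh a - sinh a) / sinh a ^ 3)
        ≤ 1 + sinh a ^ 2 * ((a * cosh a - sinh a) / sinh a ^ 3) := by gcongr
      _ = a * cosh a / sinh a := (hsplit a ha).symm
      _ ≤ c * cosh c / sinh c := monotoneOn_mul_cosh_div_sinh ha hc hac
  · calc 1 + e * ((a * cosh a - sinh a) / sinh a ^ 3)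
        ≤ 1 + sinh c ^ 2 * ((a * cosh a - sinh a) / sinh a ^ 3) := by gcongr
      _ ≤ 1 + sinh c ^ 2 * ((c * cosh c - sinh c) / sinh c ^ 3) := by
        gcongr 1 + _ * ?_
        exact antitoneOn_mul_cosh_sub_sinh_div_sinh_pow_three hc ha hca
      _ = c * cosh c / sinh c := (hsplit c hc).symm

end Real

namespace HyperbolicTriangle

/-- `cosh` of the side opposite the angle with cosine `t` between the sides `x` and `c`. -/
noncomputable def coshSide (c t x : ℝ) : ℝ := cosh x * cosh c - sinh x * sinh c * t

noncomputable def coshSideDeriv (c t x : ℝ) : ℝ := sinh x * cosh c - cosh x * sinh c * t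

noncomputable def side (c t x : ℝ) : ℝ := arcosh (coshSide c t x)

noncomputable def sideDeriv (c t x : ℝ) : ℝ := coshSideDeriv c t x / sinh (side c t x)

noncomputable def comparisonGap (c t x : ℝ) : ℝ :=
  c * cosh c / sinh c * x ^ 2 + c ^ 2 - 2 * x * c * t - side c t x ^ 2

noncomputable def comparisonGapDeriv (c t x : ℝ) : ℝ :=
  2 * (c * cosh c / sinh c) * x - 2 * c * t - 2 * side c t x * sideDeriv c t x

variable {c t x : ℝ}

theorem one_lt_coshSide (hc : 0 < c) (ht : t < 1) (hx : 0 ≤ x) : 1 < coshSide c t x := by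
  rcases hx.eq_or_lt with rfl | hx
  · simpa [coshSide] using hc.ne'
  · have hcosh : coshSide c t x = cosh (x - c) + sinh x * sinh c * (1 - t) := by
      rw [coshSide, cosh_sub]
      ring
    rw [hcosh]
    have := mul_pos (mul_pos (sinh_pos_iff.2 hx) (sinh_pos_iff.2 hc)) (sub_pos.2 ht)
    linarith [one_le_cosh (x - c)]

theorem cosh_side (h : 1 ≤ coshSide c t x) : cosh (side c t x) = coshSide c t x :=
  cosh_arcosh h

theorem sinh_side_sq (h : 1 ≤ coshSide c t x) :
    sinh (side c t x) ^ 2 = coshSide c t x ^ 2 - 1 := by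
  rw [side, sinh_arcosh h, sq_sqrt (by nlinarith)]

/-- The invariant `(1 - t ^ 2) * sinh c ^ 2` is `sinh² h`, where `h` is the distance from the
far vertex to the line of the side `x`. -/
theorem sinh_side_sq_sub_coshSideDeriv_sq (h : 1 ≤ coshSide c t x) :
    sinh (side c t x) ^ 2 - coshSideDeriv c t x ^ 2 = (1 - t ^ 2) * sinh c ^ 2 := by
  rw [sinh_side_sq h, coshSide, coshSideDeriv]
  linear_combination (cosh c ^ 2 - t ^ 2 * sinh c ^ 2) * cosh_sq x + cosh_sq c

theorem side_zero (hc : 0 ≤ c) : side c t 0 = c := by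
  simp [side, coshSide, arcosh_cosh hc]

theorem sideDeriv_zero (hc : 0 < c) : sideDeriv c t 0 = -t := by
  have := (sinh_pos_iff.2 hc).ne'
  simp only [sideDeriv, coshSideDeriv, side_zero hc.le, sinh_zero, cosh_zero, zero_mul, one_mul,
    zero_sub]
  field_simp

theorem comparisonGap_zero (hc : 0 < c) : comparisonGap c t 0 = 0 := by
  simp [comparisonGap, side_zero hc.le]

theorem comparisonGapDeriv_zero (hc : 0 < c) : comparisonGapDeriv c t 0 = 0 := by
  simp [comparisonGapDeriv, side_zero hc.le, sideDeriv_zero hc]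

theorem hasDerivAt_coshSide (x : ℝ) : HasDerivAt (coshSide c t) (coshSideDeriv c t x) x :=
  ((hasDerivAt_cosh x).mul_const _).fun_sub (((hasDerivAt_sinh x).mul_const _).mul_const _)

theorem hasDerivAt_coshSideDeriv (x : ℝ) : HasDerivAt (coshSideDeriv c t) (coshSide c t x) x :=
  ((hasDerivAt_sinh x).mul_const _).fun_sub (((hasDerivAt_cosh x).mul_const _).mul_const _)

theorem hasDerivAt_side (h : 1 < coshSide c t x) :
    HasDerivAt (side c t) (sideDeriv c t x) x := by
  rw [sideDeriv, side, sinh_arcosh h.le, div_eq_inv_mul]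
  exact (hasDerivAt_arcosh h).comp x (hasDerivAt_coshSide x)

theorem hasDerivAt_sideDeriv (h : 1 < coshSide c t x) :
    HasDerivAt (sideDeriv c t)
      (coshSide c t x * ((1 - t ^ 2) * sinh c ^ 2) / sinh (side c t x) ^ 3) x := by
  have hS : sinh (side c t x) ≠ 0 := (sinh_pos_iff.2 (arcosh_pos h)).ne'
  refine ((hasDerivAt_coshSideDeriv x).fun_div ((hasDerivAt_sinh _).comp x (hasDerivAt_side h))
    hS).congr_deriv ?_
  rw [Function.comp_apply, cosh_side h.le, sideDeriv, ← sinh_side_sq_sub_coshSideDeriv_sq h.le]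
  field_simp

theorem hasDerivAt_comparisonGap (h : 1 < coshSide c t x) :
    HasDerivAt (comparisonGap c t) (comparisonGapDeriv c t x) x :=
  ((((hasDerivAt_pow 2 x).const_mul _).add_const _).fun_sub
    ((((hasDerivAt_id' x).const_mul 2).mul_const c).mul_const t)).fun_sub
    ((hasDerivAt_side h).fun_pow 2) |>.congr_deriv (by simp only [comparisonGapDeriv]; ring)

theorem hasDerivAt_comparisonGapDeriv (h : 1 < coshSide c t x) :
    HasDerivAt (comparisonGapDeriv c t)
      (2 * (c * cosh c / sinh c) - 2 * (sideDeriv c t x ^ 2 +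
        side c t x * (coshSide c t x * ((1 - t ^ 2) * sinh c ^ 2) / sinh (side c t x) ^ 3))) x :=
  (((hasDerivAt_id' x).const_mul _).sub_const _).fun_sub
    (((hasDerivAt_side h).const_mul 2).fun_mul (hasDerivAt_sideDeriv h)) |>.congr_deriv (by ring)

theorem sideDeriv_sq_add_le (hc : 0 < c) (h : 1 < coshSide c t x) :
    sideDeriv c t x ^ 2 +
        side c t x * (coshSide c t x * ((1 - t ^ 2) * sinh c ^ 2) / sinh (side c t x) ^ 3) ≤
      c * cosh c / sinh c := by
  have hS : sinh (side c t x) ≠ 0 := (sinh_pos_iff.2 (arcosh_pos h)).ne'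
  have hinv := sinh_side_sq_sub_coshSideDeriv_sq h.le
  have hrw : sideDeriv c t x ^ 2 +
        side c t x * (coshSide c t x * ((1 - t ^ 2) * sinh c ^ 2) / sinh (side c t x) ^ 3) =
      1 + (1 - t ^ 2) * sinh c ^ 2 * ((side c t x * cosh (side c t x) - sinh (side c t x)) /
        sinh (side c t x) ^ 3) := by
    rw [sideDeriv, cosh_side h.le]
    field_simp
    linear_combination (-sinh (side c t x)) * hinv
  rw [hrw]
  refine one_add_mul_le_mul_cosh_div_sinh (arcosh_pos h) hc
    (by nlinarith [sq_nonneg (coshSideDeriv c t x)]) ?_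
  nlinarith [sq_nonneg t, sq_nonneg (sinh c)]

theorem comparisonGap_nonneg (hc : 0 < c) (ht : t < 1) (hx : 0 ≤ x) :
    0 ≤ comparisonGap c t x := by
  have hC : ∀ y ∈ Ici (0 : ℝ), 1 < coshSide c t y := fun y hy => one_lt_coshSide hc ht hy
  have hderiv : MonotoneOn (comparisonGapDeriv c t) (Ici 0) :=
    monotoneOn_of_hasDerivAt_nonneg (convex_Ici 0)
      (fun y hy => hasDerivAt_comparisonGapDeriv (hC y hy))
      (fun y hy => by linarith [sideDeriv_sq_add_le hc (hC y (interior_subset hy))])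
  have hgap : MonotoneOn (comparisonGap c t) (Ici 0) :=
    monotoneOn_of_hasDerivAt_nonneg (convex_Ici 0)
      (fun y hy => hasDerivAt_comparisonGap (hC y hy))
      (fun y hy => by
        simpa [comparisonGapDeriv_zero hc] using
          hderiv self_mem_Ici (interior_subset hy) (interior_subset hy))
  simpa [comparisonGap_zero hc] using hgap self_mem_Ici hx hx

end HyperbolicTriangle

open HyperbolicTriangle in
theorem sq_le_of_hyperbolic_law_of_cosines {a b c t : ℝ} (hb : 0 ≤ b) (hc : 0 < c) (ht : t ≤ 1)
    (hlaw : cosh a = cosh b * cosh c - sinh b * sinh c * t) :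
    a ^ 2 ≤ c * cosh c / sinh c * b ^ 2 + c ^ 2 - 2 * b * c * t := by
  rcases ht.lt_or_eq with ht | rfl
  · have hside : side c t b = |a| := by
      rw [side, coshSide, ← hlaw, ← cosh_abs, arcosh_cosh (abs_nonneg a)]
    have := comparisonGap_nonneg hc ht hb
    rw [comparisonGap, hside, sq_abs] at this
    linarith
  · have hK : 1 ≤ c * cosh c / sinh c :=
      (one_le_div (sinh_pos_iff.2 hc)).2 (sinh_le_mul_cosh hc.le)
    have hcosh : cosh a = cosh (b - c) := by rw [cosh_sub, hlaw, mul_one]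
    have habs : |a| = |b - c| :=
      le_antisymm (cosh_le_cosh.1 hcosh.le) (cosh_le_cosh.1 hcosh.ge)
    rw [(sq_eq_sq_iff_abs_eq_abs a (b - c)).2 habs]
    nlinarith [mul_nonneg (sub_nonneg.2 hK) (sq_nonneg b)]

theorem hyperbolic_law_of_cosines_comparison_general
    (s a b c t : ℝ) (hs : 0 < s) (hb : 0 ≤ b) (hc : 0 < c)
    (ht : t ∈ Set.Icc (-1 : ℝ) 1)
    (hlaw : Real.cosh (s * a) =
      Real.cosh (s * b) * Real.cosh (s * c) - Real.sinh (s * b) * Real.sinh (s * c) * t) :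
    a ^ 2 ≤ (s * c * Real.cosh (s * c) / Real.sinh (s * c)) * b ^ 2 + c ^ 2 - 2 * b * c * t := by
  have hscaled := sq_le_of_hyperbolic_law_of_cosines (mul_nonneg hs.le hb) (mul_pos hs hc) ht.2 hlaw
  rw [← mul_le_mul_iff_right₀ (pow_pos hs 2)]
  linear_combination hscaled

/-- Analytic core of the trigonometric comparison inequality for curvature
lower bound `κ = -s² < 0`: if the sides `a`, `b`, `c` and `t = cos A` satisfy
the hyperbolic law of cosines, then the squared-distance comparison holds with
distortion factor `s·c·coth(s·c)`. -/
theorem hyperbolic_law_of_cosines_comparison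
    (s a b c t : ℝ) (hs : 0 < s) (ha : 0 ≤ a) (hb : 0 ≤ b) (hc : 0 < c)
    (ht : t ∈ Set.Icc (-1 : ℝ) 1)
    (hlaw : Real.cosh (s * a) =
      Real.cosh (s * b) * Real.cosh (s * c) - Real.sinh (s * b) * Real.sinh (s * c) * t) :
    a ^ 2 ≤ (s * c * Real.cosh (s * c) / Real.sinh (s * c)) * b ^ 2 + c ^ 2 - 2 * b * c * t :=
  hyperbolic_law_of_cosines_comparison_general s a b c t hs hb hc ht hlaw
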